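/- If k̄ > γ/β₁ and Φ := −k₀(u(c₁)−u(c₂)) − (γ − k̄β₁) − k₀·u(cₙ)·ω(k̄β₁ − γ) < 0, then (i, x₁) = (1 − γ/(k̄β₁), 1) is a stable equilibrium: the Jacobian there has trace h₁ = Φ − (k̄β₁ − γ) < 0 and determinant (γ − k̄β₁)·Φ > 0. -/

import Mathlib

/-- Prelec weighting function extended by ω(0) = 0. -/
noncomputable def prelec0 (α p : ℝ) : ℝ :=
  if p = 0 then 0 else Real.exp (-((-Real.log p) ^ α))

/-- di/dt of the epidemic-behavior co-evolution system (with β₂ = 0). -/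
noncomputable def F1 (γ kβ₁ i x : ℝ) : ℝ := i * (1 - i) * kβ₁ * x - γ * i

/-- dx₁/dt of the epidemic-behavior co-evolution system. -/
noncomputable def F2 (α k₀ kβ₁ ucn uc1 uc2 i x : ℝ) : ℝ :=
  x * (1 - x) * (-(kβ₁ * i) + k₀ * (ucn * prelec0 α (kβ₁ * i) + uc1 - uc2))

lemma hasDerivAt_F1_infected (γ kβ₁ i x : ℝ) :
    HasDerivAt (fun i => F1 γ kβ₁ i x) ((1 - 2 * i) * kβ₁ * x - γ) i :=
  (((((hasDerivAt_id' i).mul ((hasDerivAt_id' i).const_sub 1)).mul_const kβ₁).mul_const x).sub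
    ((hasDerivAt_id' i).const_mul γ)).congr_deriv (by ring)

lemma hasDerivAt_F2_behaviour (α k₀ kβ₁ ucn uc1 uc2 i x : ℝ) :
    HasDerivAt (fun x => F2 α k₀ kβ₁ ucn uc1 uc2 i x)
      ((1 - 2 * x) * (-(kβ₁ * i) + k₀ * (ucn * prelec0 α (kβ₁ * i) + uc1 - uc2))) x :=
  (((hasDerivAt_id' x).mul ((hasDerivAt_id' x).const_sub 1)).mul_const _).congr_deriv (by ring)

lemma F2_of_eq_one (α k₀ kβ₁ ucn uc1 uc2 i : ℝ) : F2 α k₀ kβ₁ ucn uc1 uc2 i 1 = 0 := by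
  simp [F2]

theorem stmt12_general (α γ k₀ kβ₁ ucn uc1 uc2 : ℝ)
    (hγ : 0 < γ) (hkβ : γ < kβ₁)
    (Φ : ℝ)
    (hΦdef : Φ = -k₀ * (uc1 - uc2) - (γ - kβ₁) - k₀ * ucn * prelec0 α (kβ₁ - γ))
    (hΦ : Φ < 0) :
    (deriv (fun i => F1 γ kβ₁ i 1) (1 - γ / kβ₁)
        + deriv (fun x => F2 α k₀ kβ₁ ucn uc1 uc2 (1 - γ / kβ₁) x) 1
        = Φ - (kβ₁ - γ) ∧
      Φ - (kβ₁ - γ) < 0) ∧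
    (deriv (fun i => F1 γ kβ₁ i 1) (1 - γ / kβ₁)
          * deriv (fun x => F2 α k₀ kβ₁ ucn uc1 uc2 (1 - γ / kβ₁) x) 1
        - deriv (fun x => F1 γ kβ₁ (1 - γ / kβ₁) x) 1
          * deriv (fun i => F2 α k₀ kβ₁ ucn uc1 uc2 i 1) (1 - γ / kβ₁)
        = (γ - kβ₁) * Φ ∧
      0 < (γ - kβ₁) * Φ) := by
  set i₀ := 1 - γ / kβ₁
  have hinfection : kβ₁ * i₀ = kβ₁ - γ := by
    simp only [i₀]
    field_simp [(hγ.trans hkβ).ne']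
  have hJ_ii : deriv (fun i => F1 γ kβ₁ i 1) i₀ = γ - kβ₁ := by
    rw [(hasDerivAt_F1_infected γ kβ₁ i₀ 1).deriv]
    linear_combination (-2) * hinfection
  have hJ_xx : deriv (fun x => F2 α k₀ kβ₁ ucn uc1 uc2 i₀ x) 1 = Φ := by
    rw [(hasDerivAt_F2_behaviour α k₀ kβ₁ ucn uc1 uc2 i₀ 1).deriv, hinfection, hΦdef]
    ring
  -- The line x₁ = 1 is invariant, so the Jacobian is triangular there.
  have hJ_xi : deriv (fun i => F2 α k₀ kβ₁ ucn uc1 uc2 i 1) i₀ = 0 := by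
    simp only [F2_of_eq_one, deriv_const]
  refine ⟨⟨by rw [hJ_ii, hJ_xx]; ring, by linarith⟩, ⟨?_, mul_pos_of_neg_of_neg (by linarith) hΦ⟩⟩
  rw [hJ_ii, hJ_xx, hJ_xi]
  ring

/-- If k̄β₁ > γ and Φ < 0, then (1 − γ/(k̄β₁), 1) is a stable equilibrium:
the Jacobian there has trace Φ − (k̄β₁ − γ) < 0 and determinant (γ − k̄β₁)·Φ > 0,
where Φ = −k₀(u(c₁)−u(c₂)) − (γ − k̄β₁) − k₀·u(cₙ)·ω(k̄β₁ − γ). -/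
theorem stmt12 (α γ k₀ kβ₁ ucn uc1 uc2 : ℝ)
    (hα : 0 < α) (hα1 : α ≤ 1) (hγ : 0 < γ) (hk₀ : 0 < k₀) (hkβ : γ < kβ₁)
    (hucn : ucn < 0) (hΔ : 0 < uc1 - uc2)
    (Φ : ℝ)
    (hΦdef : Φ = -k₀ * (uc1 - uc2) - (γ - kβ₁) - k₀ * ucn * prelec0 α (kβ₁ - γ))
    (hΦ : Φ < 0) :
    (deriv (fun i => F1 γ kβ₁ i 1) (1 - γ / kβ₁)
        + deriv (fun x => F2 α k₀ kβ₁ ucn uc1 uc2 (1 - γ / kβ₁) x) 1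
        = Φ - (kβ₁ - γ) ∧
      Φ - (kβ₁ - γ) < 0) ∧
    (deriv (fun i => F1 γ kβ₁ i 1) (1 - γ / kβ₁)
          * deriv (fun x => F2 α k₀ kβ₁ ucn uc1 uc2 (1 - γ / kβ₁) x) 1
        - deriv (fun x => F1 γ kβ₁ (1 - γ / kβ₁) x) 1
          * deriv (fun i => F2 α k₀ kβ₁ ucn uc1 uc2 i 1) (1 - γ / kβ₁)
        = (γ - kβ₁) * Φ ∧
      0 < (γ - kβ₁) * Φ) :=
  stmt12_general α γ k₀ kβ₁ ucn uc1 uc2 hγ hkβ Φ hΦdef hΦ
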